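/- Let V be a ℂ-vector space with operators E, F, Fᵈ, Eᵈ, Hᵈ and vector v₀, a positive integer k, and constant c ∈ ℂ, satisfying for all 1 ≤ i ≤ k+1: Fᵈ·(Eⁱ·v₀) = E·Fᵈ·(E^{i-1}·v₀) - F·Eᵈ·(E^{i-1}·v₀) + Eᵈ·F·(E^{i-1}·v₀) - Hᵈ·(E^{i-1}·v₀) + c·E^{i-1}·v₀. Assume additionally: Eᵈ·(Eʲ·v₀) = 0 for all 0 ≤ j ≤ k; F·(E^{i-1}·v₀) = (i-1)(k-i+2)·E^{i-2}·v₀ for i ≥ 2 and F·v₀ = 0; Hᵈ·(Eʲ·v₀) = 0 for all j ≥ 0; Fᵈ·v₀ = 0; E^{k+1}·v₀ = 0; and E^k·v₀ ≠ 0. Then c = 0. -/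
import Mathlib


theorem stmt_11 (V : Type*) [AddCommGroup V] [Module ℂ V]
    (E F Fd Ed Hd : V →ₗ[ℂ] V) (v₀ : V) (k : ℕ) (hk : 0 < k) (c : ℂ)
    (hrec : ∀ i : ℕ, 1 ≤ i → i ≤ k + 1 →
      Fd ((E ^ i) v₀) = E (Fd ((E ^ (i - 1)) v₀)) - F (Ed ((E ^ (i - 1)) v₀))
        + Ed (F ((E ^ (i - 1)) v₀)) - Hd ((E ^ (i - 1)) v₀) + c • (E ^ (i - 1)) v₀)
    (hEd : ∀ j : ℕ, j ≤ k → Ed ((E ^ j) v₀) = 0)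
    (hF : ∀ i : ℕ, 2 ≤ i →
      F ((E ^ (i - 1)) v₀) = (((i : ℂ) - 1) * ((k : ℂ) - (i : ℂ) + 2)) • (E ^ (i - 2)) v₀)
    (hFv : F v₀ = 0)
    (hHd : ∀ j : ℕ, Hd ((E ^ j) v₀) = 0)
    (hFd : Fd v₀ = 0)
    (hnil : (E ^ (k + 1)) v₀ = 0)
    (hnz : (E ^ k) v₀ ≠ 0) :
    c = 0 := by
  have key : ∀ i : ℕ, i ≤ k + 1 → Fd ((E ^ i) v₀) = ((i : ℂ) * c) • (E ^ (i - 1)) v₀ := by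
    intro i
    induction i with
    | zero => intro _; simpa using hFd
    | succ n ih =>
      intro hn
      have hn' : n ≤ k := Nat.lt_succ_iff.mp hn
      have hrec' := hrec (n + 1) (by omega) hn
      simp only [Nat.add_sub_cancel] at hrec'
      have hEdF : Ed (F ((E ^ n) v₀)) = 0 := by
        cases n with
        | zero => simp [hFv]
        | succ m =>
          have := hF (m + 2) (by omega)
          norm_num at this
          rw [this, map_smul, hEd m (by omega), smul_zero]
      rw [hrec', hEdF, hEd n hn', hHd n, ih (by omega)]
      simp only [map_zero, map_smul, sub_zero, add_zero, zero_add]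
      cases n with
      | zero => simp
      | succ m =>
        have hE : E ((E ^ (m + 1 - 1)) v₀) = (E ^ (m + 1)) v₀ := by
          simp only [Nat.add_sub_cancel]
          rw [← Module.End.mul_apply, ← pow_succ']
        rw [hE]
        simp only [Nat.add_sub_cancel, ← add_smul]
        push_cast
        ring_nf
  have hfinal := key (k + 1) le_rfl
  rw [hnil, map_zero, Nat.add_sub_cancel] at hfinal
  have := (smul_eq_zero.mp hfinal.symm).resolve_right hnz
  rcases mul_eq_zero.mp this with h | h
  · exact absurd h (by exact_mod_cast Nat.succ_ne_zero k)
  · exact h
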